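/- If two distinct superbubbles share a vertex, then either one's exit is the other's entrance or one is included in the other's interior: if (s₁, t₁) and (s₂, t₂) are entrance/exit pairs with (s₁,t₁) ≠ (s₂,t₂) and U(s₁,t₁) ∩ U(s₂,t₂) ≠ ∅, then t₁ = s₂, or t₂ = s₁, or U(s₁,t₁) ⊆ U(s₂,t₂) \ {s₂, t₂}, or U(s₂,t₂) ⊆ U(s₁,t₁) \ {s₁, t₁}. -/

import Mathlib

/-- The vertex set of the (potential) superbubble with entrance `s` and exit `t`:
vertices reachable from `s` without leaving through `t`. -/
def bubbleSet {V : Type*} (Adj : V → V → Prop) (s t : V) : Set V :=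
  {v | Relation.ReflTransGen (fun u w => Adj u w ∧ u ≠ t) s v}

/-- The pair `(s,t)` satisfies the reachability, matching and acyclicity conditions. -/
def SBCore {V : Type*} (Adj : V → V → Prop) (s t : V) : Prop :=
  s ≠ t ∧
  -- reachability: `t` is reachable from `s`
  Relation.ReflTransGen Adj s t ∧
  -- matching: vertices reachable from `s` without passing through `t` are exactly
  -- the vertices from which `t` is reachable without passing through `s`
  bubbleSet Adj s t = {v | Relation.ReflTransGen (fun u w => Adj u w ∧ w ≠ s) v t} ∧
  -- acyclicity: the subgraph induced by `bubbleSet Adj s t` is acyclic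
  ¬ ∃ v ∈ bubbleSet Adj s t,
      Relation.TransGen
        (fun u w => Adj u w ∧ u ∈ bubbleSet Adj s t ∧ w ∈ bubbleSet Adj s t) v v

/-- `(s,t)` is the entrance/exit pair of a superbubble: it satisfies reachability,
matching, acyclicity and minimality. -/
def IsEntranceExit {V : Type*} (Adj : V → V → Prop) (s t : V) : Prop :=
  SBCore Adj s t ∧
  -- minimality
  ¬ ∃ t' ∈ bubbleSet Adj s t, t' ≠ t ∧ t' ≠ s ∧ SBCore Adj s t'

/-!
A path can enter `U(s,t)` only through `s` (by matching, a predecessor of a vertex of `U(s,t)`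
other than `s` still reaches `t`) and can leave it only through `t`. Hence, when two bubbles
overlap, one of the entrances and one of the exits lie in the other bubble.
If `s₁ ∈ U₂` and `t₂ ∈ U₁` with `t₂ ≠ t₁`, then `(s₁, t₂)` satisfies reachability, matching and
acyclicity, contradicting the minimality of `(s₁, t₁)`; if `t₁ = t₂` and `s₂ ∈ U₁`, the pair
`(s₁, s₂)` does, with the same effect. What remains is `s₂ ∈ U₁` with `s₁, t₁ ∉ U₂`, and then
`U₂`, swept out from `s₂`, stays inside `U₁` without meeting `s₁` or `t₁`.
-/

open Relation

def inducedAdj {V : Type*} (Adj : V → V → Prop) (S : Set V) (u w : V) : Prop :=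
  Adj u w ∧ u ∈ S ∧ w ∈ S

section

variable {V : Type*} {Adj : V → V → Prop} {R : V → V → Prop} {S T : Set V}
  {s t a b u v w x y s₁ t₁ s₂ t₂ : V}

theorem entrance_mem_bubbleSet : s ∈ bubbleSet Adj s t := ReflTransGen.refl

theorem reflTransGen_inducedAdj_of_mem_left (hx : x ∈ bubbleSet Adj s t)
    (hp : ReflTransGen (fun u w => Adj u w ∧ u ≠ t) x y) :
    ReflTransGen (inducedAdj Adj (bubbleSet Adj s t)) x y := by
  induction hp with
  | refl => exact .refl
  | tail hxu e ih => exact ih.tail ⟨e.1, hx.trans hxu, (hx.trans hxu).tail e⟩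

theorem acyclic_mono (hST : S ⊆ T) (hT : ¬ ∃ v ∈ T, TransGen (inducedAdj Adj T) v v) :
    ¬ ∃ v ∈ S, TransGen (inducedAdj Adj S) v v := by
  rintro ⟨v, hv, hc⟩
  exact hT ⟨v, hST hv, TransGen.mono (fun u w huw => ⟨huw.1, hST huw.2.1, hST huw.2.2⟩) _ _ hc⟩

theorem bubbleSet_subset_bubbleSet (hs : s₂ ∈ bubbleSet Adj s₁ t₁)
    (ht : t₁ ∈ bubbleSet Adj s₂ t₂ → t₁ = t₂) : bubbleSet Adj s₂ t₂ ⊆ bubbleSet Adj s₁ t₁ := by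
  intro w hw
  induction hw with
  | refl => exact hs
  | tail hu e ih =>
    refine ih.tail ⟨e.1, ?_⟩
    rintro rfl
    exact e.2 (ht hu)

theorem mem_bubbleSet_or_reflTransGen_exit (hR : R ≤ Adj) (hp : ReflTransGen R v w)
    (hv : v ∈ bubbleSet Adj s t) : w ∈ bubbleSet Adj s t ∨ ReflTransGen R t w := by
  induction hp with
  | refl => exact .inl hv
  | @tail u w _ e ih =>
    rcases ih with hu | htu
    · by_cases hut : u = t
      · exact .inr (hut ▸ .single e)
      · exact .inl (hu.tail ⟨hR _ _ e, hut⟩)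
    · exact .inr (htu.tail e)

namespace SBCore

theorem mem_bubbleSet_iff (h : SBCore Adj s t) :
    v ∈ bubbleSet Adj s t ↔ ReflTransGen (fun u w => Adj u w ∧ w ≠ s) v t := by
  rw [h.2.2.1]; rfl

theorem exit_mem (h : SBCore Adj s t) : t ∈ bubbleSet Adj s t :=
  h.mem_bubbleSet_iff.2 .refl

theorem mem_of_reflTransGen (h : SBCore Adj s t)
    (hp : ReflTransGen (fun u w => Adj u w ∧ w ≠ s) x y) (hy : y ∈ bubbleSet Adj s t) :
    x ∈ bubbleSet Adj s t :=
  h.mem_bubbleSet_iff.2 (hp.trans (h.mem_bubbleSet_iff.1 hy))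

theorem reflTransGen_inducedAdj_of_mem_right (h : SBCore Adj s t)
    (hy : y ∈ bubbleSet Adj s t) (hp : ReflTransGen (fun u w => Adj u w ∧ w ≠ s) x y) :
    ReflTransGen (inducedAdj Adj (bubbleSet Adj s t)) x y := by
  induction hp using ReflTransGen.head_induction_on with
  | refl => exact .refl
  | head e huy ih =>
    exact .head ⟨e.1, h.mem_of_reflTransGen (.head e huy) hy, h.mem_of_reflTransGen huy hy⟩ ih

theorem false_of_adj_of_reflTransGen (h : SBCore Adj s t) (hu : u ∈ bubbleSet Adj s t)
    (hw : w ∈ bubbleSet Adj s t) (huw : Adj u w)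
    (hwu : ReflTransGen (inducedAdj Adj (bubbleSet Adj s t)) w u) : False :=
  h.2.2.2 ⟨u, hu, TransGen.head' ⟨huw, hu, hw⟩ hwu⟩

theorem not_adj_entrance (h : SBCore Adj s t) (hu : u ∈ bubbleSet Adj s t) : ¬ Adj u s :=
  fun hus => h.false_of_adj_of_reflTransGen hu entrance_mem_bubbleSet hus
    (reflTransGen_inducedAdj_of_mem_left entrance_mem_bubbleSet hu)

theorem not_adj_exit (h : SBCore Adj s t) (hw : w ∈ bubbleSet Adj s t) : ¬ Adj t w :=
  fun htw => h.false_of_adj_of_reflTransGen h.exit_mem hw htw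
    (h.reflTransGen_inducedAdj_of_mem_right h.exit_mem (h.mem_bubbleSet_iff.1 hw))

theorem mem_bubbleSet_or_reflTransGen_entrance (h : SBCore Adj s t) (hR : R ≤ Adj)
    (hp : ReflTransGen R v w) (hw : w ∈ bubbleSet Adj s t) :
    v ∈ bubbleSet Adj s t ∨ ReflTransGen R v s := by
  induction hp using ReflTransGen.head_induction_on with
  | refl => exact .inl hw
  | @head v u e _ ih =>
    rcases ih with hu | hus
    · by_cases hu_s : u = s
      · exact .inr (hu_s ▸ .single e)
      · exact .inl (h.mem_of_reflTransGen (.single ⟨hR _ _ e, hu_s⟩) hu)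
    · exact .inr (.head e hus)

theorem exit_mem_or_exit_mem (h₁ : SBCore Adj s₁ t₁)
    (hI : (bubbleSet Adj s₁ t₁ ∩ bubbleSet Adj s₂ t₂).Nonempty) :
    t₁ ∈ bubbleSet Adj s₂ t₂ ∨ t₂ ∈ bubbleSet Adj s₁ t₁ := by
  obtain ⟨v, hv₁, hv₂⟩ := hI
  exact (mem_bubbleSet_or_reflTransGen_exit (fun _ _ e => e.1) (h₁.mem_bubbleSet_iff.1 hv₁)
    hv₂).imp_right h₁.mem_bubbleSet_iff.2

theorem entrance_mem_or_entrance_mem (h₂ : SBCore Adj s₂ t₂)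
    (hI : (bubbleSet Adj s₁ t₁ ∩ bubbleSet Adj s₂ t₂).Nonempty) :
    s₁ ∈ bubbleSet Adj s₂ t₂ ∨ s₂ ∈ bubbleSet Adj s₁ t₁ := by
  obtain ⟨v, hv₁, hv₂⟩ := hI
  exact h₂.mem_bubbleSet_or_reflTransGen_entrance (fun _ _ e => e.1) hv₁ hv₂

/-- If `v` reaches `b ∈ U(s,t)` avoiding `s`, then the route from `s` to `v` inside `U(s,t)`
cannot pass through `b`: continuing to `v` and back to `b` would close a cycle. -/
theorem mem_bubbleSet_of_reflTransGen (h : SBCore Adj s t) (hb : b ∈ bubbleSet Adj s t)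
    (hv : ReflTransGen (fun u w => Adj u w ∧ w ≠ s) v b) : v ∈ bubbleSet Adj s b := by
  have hvU : v ∈ bubbleSet Adj s t := h.mem_of_reflTransGen hv hb
  induction hvU with
  | refl => exact .refl
  | @tail u v hu e ih =>
    have hvs : v ≠ s := fun hvs => h.not_adj_entrance hu (hvs ▸ e.1)
    have hub : u ≠ b := by
      rintro rfl
      exact h.false_of_adj_of_reflTransGen hu (hu.tail e) e.1
        (h.reflTransGen_inducedAdj_of_mem_right hb hv)
    exact (ih (.head ⟨e.1, hvs⟩ hv)).tail ⟨e.1, hub⟩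

theorem reflTransGen_exit_of_mem_bubbleSet (h : SBCore Adj s t) (ha : a ∈ bubbleSet Adj s t)
    (hv : v ∈ bubbleSet Adj a t) : ReflTransGen (fun u w => Adj u w ∧ w ≠ a) v t := by
  have hvt := h.mem_bubbleSet_iff.1 (ha.trans hv)
  induction hvt using ReflTransGen.head_induction_on with
  | refl => exact .refl
  | @head v u e hut ih =>
    have hu : u ∈ bubbleSet Adj s t := h.mem_bubbleSet_iff.2 hut
    have hvt : v ≠ t := by
      rintro rfl
      exact h.not_adj_exit hu e.1
    have hua : u ≠ a := by
      rintro rfl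
      exact h.false_of_adj_of_reflTransGen (ha.trans hv) hu e.1
        (reflTransGen_inducedAdj_of_mem_left ha hv)
    exact .head ⟨e.1, hua⟩ (ih (hv.tail ⟨e.1, hvt⟩))

theorem of_entrance_mem_of_exit_mem (h₁ : SBCore Adj s₁ t₁) (h₂ : SBCore Adj s₂ t₂)
    (hs₁ : s₁ ∈ bubbleSet Adj s₂ t₂) (ht₂ : t₂ ∈ bubbleSet Adj s₁ t₁) (hne : s₁ ≠ t₂) :
    SBCore Adj s₁ t₂ :=
  ⟨hne, ReflTransGen.mono (fun _ _ e => e.1) _ _ (h₂.mem_bubbleSet_iff.1 hs₁),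
    Set.ext fun _ => ⟨h₂.reflTransGen_exit_of_mem_bubbleSet hs₁,
      h₁.mem_bubbleSet_of_reflTransGen ht₂⟩,
    acyclic_mono (fun _ hv => hs₁.trans hv) h₂.2.2.2⟩

theorem bubbleSet_inter_subset_singleton (h₂ : SBCore Adj s₂ t₂)
    (hs₁ : s₁ ∉ bubbleSet Adj s₂ t₂) : bubbleSet Adj s₁ s₂ ∩ bubbleSet Adj s₂ t₂ ⊆ {s₂} := by
  rintro v ⟨hv, hv₂⟩
  induction hv with
  | refl => exact absurd hv₂ hs₁
  | @tail u v _ e ih =>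
    by_contra hvs
    exact e.2 (ih (h₂.mem_of_reflTransGen (.single ⟨e.1, hvs⟩) hv₂))

theorem of_same_exit (h₁ : SBCore Adj s₁ t) (h₂ : SBCore Adj s₂ t)
    (hs₁ : s₁ ∉ bubbleSet Adj s₂ t) (hs₂ : s₂ ∈ bubbleSet Adj s₁ t) (hne : s₁ ≠ s₂) :
    SBCore Adj s₁ s₂ := by
  have hinter := h₂.bubbleSet_inter_subset_singleton hs₁
  have hsub : bubbleSet Adj s₁ s₂ ⊆ bubbleSet Adj s₁ t :=
    bubbleSet_subset_bubbleSet entrance_mem_bubbleSet fun ht => hinter ⟨ht, h₂.exit_mem⟩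
  refine ⟨hne, ReflTransGen.mono (fun _ _ e => e.1) _ _ hs₂,
    Set.ext fun v => ⟨fun hv => ?_, h₁.mem_bubbleSet_of_reflTransGen hs₂⟩,
    acyclic_mono hsub h₁.2.2.2⟩
  rcases h₂.mem_bubbleSet_or_reflTransGen_entrance (fun _ _ e => e.1)
    (h₁.mem_bubbleSet_iff.1 (hsub hv)) h₂.exit_mem with hv₂ | hvs₂
  · rw [hinter ⟨hv, hv₂⟩]
    exact .refl
  · exact hvs₂

theorem eq_of_entrance_mem_of_subset (h : SBCore Adj s t)
    (hsub : bubbleSet Adj a b ⊆ bubbleSet Adj s t) (hs : s ∈ bubbleSet Adj a b) : s = a := by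
  rcases hs.cases_tail with hsa | ⟨u, hu, e⟩
  · exact hsa
  · exact absurd e.1 (h.not_adj_entrance (hsub hu))

end SBCore

namespace IsEntranceExit

theorem entrance_not_mem_of_exit_mem (h₁ : IsEntranceExit Adj s₁ t₁) (h₂ : SBCore Adj s₂ t₂)
    (ht₂ : t₂ ∈ bubbleSet Adj s₁ t₁) (htt : t₂ ≠ t₁) (hts : t₂ ≠ s₁) :
    s₁ ∉ bubbleSet Adj s₂ t₂ :=
  fun hs₁ => h₁.2 ⟨t₂, ht₂, htt, hts, h₁.1.of_entrance_mem_of_exit_mem h₂ hs₁ ht₂ hts.symm⟩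

theorem entrance_not_mem_of_same_exit (h₁ : IsEntranceExit Adj s₁ t)
    (h₂ : IsEntranceExit Adj s₂ t) (hne : s₁ ≠ s₂) : s₂ ∉ bubbleSet Adj s₁ t := by
  intro hs₂
  have hsub : bubbleSet Adj s₂ t ⊆ bubbleSet Adj s₁ t := fun _ hv => hs₂.trans hv
  have hs₁ : s₁ ∉ bubbleSet Adj s₂ t := fun hs₁ =>
    hne (h₁.1.eq_of_entrance_mem_of_subset hsub hs₁)
  exact h₁.2 ⟨s₂, hs₂, h₂.1.1, hne.symm, h₁.1.of_same_exit h₂.1 hs₁ hs₂ hne⟩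

theorem subset_interior_of_exit_mem (h₁ : IsEntranceExit Adj s₁ t₁)
    (h₂ : IsEntranceExit Adj s₂ t₂) (hne : (s₁, t₁) ≠ (s₂, t₂)) (h₁₂ : t₁ ≠ s₂)
    (h₂₁ : t₂ ≠ s₁) (hI : (bubbleSet Adj s₁ t₁ ∩ bubbleSet Adj s₂ t₂).Nonempty)
    (ht₂ : t₂ ∈ bubbleSet Adj s₁ t₁) : bubbleSet Adj s₂ t₂ ⊆ bubbleSet Adj s₁ t₁ \ {s₁, t₁} := by
  by_cases htt : t₂ = t₁
  · subst htt
    have hss : s₁ ≠ s₂ := fun hss => hne (hss ▸ rfl)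
    rcases h₂.1.entrance_mem_or_entrance_mem hI with hs₁ | hs₂
    · exact absurd hs₁ (h₂.entrance_not_mem_of_same_exit h₁ hss.symm)
    · exact absurd hs₂ (h₁.entrance_not_mem_of_same_exit h₂ hss)
  have hs₁ := h₁.entrance_not_mem_of_exit_mem h₂.1 ht₂ htt h₂₁
  have hs₂ := (h₂.1.entrance_mem_or_entrance_mem hI).resolve_left hs₁
  have ht₁ : t₁ ∉ bubbleSet Adj s₂ t₂ := fun ht₁ =>
    h₂.entrance_not_mem_of_exit_mem h₁.1 ht₁ (Ne.symm htt) h₁₂ hs₂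
  intro w hw
  refine ⟨bubbleSet_subset_bubbleSet hs₂ (fun ht₁₂ => absurd ht₁₂ ht₁) hw, ?_⟩
  rintro (rfl | rfl)
  · exact hs₁ hw
  · exact ht₁ hw

end IsEntranceExit

end

/-- If two distinct superbubbles share a vertex, either one's exit is the other's
entrance or one is included in the other's interior. -/
theorem superbubble_share_vertex {V : Type*} (Adj : V → V → Prop) (s₁ t₁ s₂ t₂ : V)
    (h₁ : IsEntranceExit Adj s₁ t₁) (h₂ : IsEntranceExit Adj s₂ t₂)
    (hne : (s₁, t₁) ≠ (s₂, t₂))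
    (hI : (bubbleSet Adj s₁ t₁ ∩ bubbleSet Adj s₂ t₂).Nonempty) :
    t₁ = s₂ ∨ t₂ = s₁ ∨
      bubbleSet Adj s₁ t₁ ⊆ bubbleSet Adj s₂ t₂ \ {s₂, t₂} ∨
      bubbleSet Adj s₂ t₂ ⊆ bubbleSet Adj s₁ t₁ \ {s₁, t₁} := by
  by_cases h₁₂ : t₁ = s₂
  · exact .inl h₁₂
  by_cases h₂₁ : t₂ = s₁
  · exact .inr (.inl h₂₁)
  rcases h₁.1.exit_mem_or_exit_mem hI with ht₁ | ht₂
  · have hI' := Set.inter_comm (bubbleSet Adj s₁ t₁) _ ▸ hI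
    exact .inr (.inr (.inl (h₂.subset_interior_of_exit_mem h₁ hne.symm h₂₁ h₁₂ hI' ht₁)))
  · exact .inr (.inr (.inr (h₁.subset_interior_of_exit_mem h₂ hne h₁₂ h₂₁ hI ht₂)))
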